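/- arXiv:2007.13572 — 6 statements merged into one kernel-verified Lean document; each statement's English description precedes it below -/
import Mathlib

section
/- Let E₁, E₂ : H → ℝ with E₂ Fréchet differentiable, let E = E₁ + E₂, let k > 0, and let Λ ≥ 0 be such that the quadratic upper bound holds. Assume kΛ ≤ 1. Let u₀ ∈ H and suppose u₊ is a global minimizer over H of the functional u ↦ E₁(u) + L₂(u,u₀) + (1/(2k))‖u − u₀‖². Then E(u₊) ≤ E(u₀). -/
theorem stmt_3_general {H : Type*} [NormedAddCommGroup H] [InnerProductSpace ℝ H]
    (E₁ E₂ : H → ℝ) (g : H → H)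
    (k Λ : ℝ) (hk : 0 < k)
    (hquad : ∀ u p : H, E₂ u ≤ E₂ p + (inner ℝ (g p) (u - p) : ℝ) + Λ / 2 * ‖u - p‖ ^ 2)
    (hkΛ : k * Λ ≤ 1) (u₀ unew : H)
    (hmin : ∀ u : H,
      E₁ unew + (E₂ u₀ + (inner ℝ (g u₀) (unew - u₀) : ℝ)) + 1 / (2 * k) * ‖unew - u₀‖ ^ 2 ≤
        E₁ u + (E₂ u₀ + (inner ℝ (g u₀) (u - u₀) : ℝ)) + 1 / (2 * k) * ‖u - u₀‖ ^ 2) :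
    E₁ unew + E₂ unew ≤ E₁ u₀ + E₂ u₀ := by
  -- Comparing the minimizer with the competitor `u₀`, and bounding `E₂ unew` by the quadratic
  -- upper bound at `u₀`, the linear terms cancel; what remains is `(Λ/2 - 1/(2k)) ‖unew - u₀‖²`.
  have hstep := hmin u₀
  rw [sub_self, inner_zero_right, norm_zero] at hstep
  have hupper := hquad unew u₀
  have hcoef : Λ / 2 * ‖unew - u₀‖ ^ 2 ≤ 1 / (2 * k) * ‖unew - u₀‖ ^ 2 := by
    refine mul_le_mul_of_nonneg_right ?_ (sq_nonneg _)
    rw [le_div_iff₀ (by positivity)]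
    linarith
  linarith

/-- One step of the basic semi-implicit scheme dissipates the energy
`E = E₁ + E₂` provided `kΛ ≤ 1`, where `Λ` gives the quadratic upper bound for `E₂`.
Here `g = ∇E₂`, `L₂(u,p) = E₂(p) + ⟨g p, u - p⟩`, and `unew` is a global minimizer of
`u ↦ E₁(u) + L₂(u,u₀) + (1/(2k))‖u − u₀‖²`. -/
theorem stmt_3 {H : Type*} [NormedAddCommGroup H] [InnerProductSpace ℝ H] [CompleteSpace H]
    (E₁ E₂ : H → ℝ) (g : H → H) (hgrad : ∀ x, HasGradientAt E₂ (g x) x)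
    (k Λ : ℝ) (hk : 0 < k) (hΛ : 0 ≤ Λ)
    (hquad : ∀ u p : H, E₂ u ≤ E₂ p + (inner ℝ (g p) (u - p) : ℝ) + Λ / 2 * ‖u - p‖ ^ 2)
    (hkΛ : k * Λ ≤ 1) (u₀ unew : H)
    (hmin : ∀ u : H,
      E₁ unew + (E₂ u₀ + (inner ℝ (g u₀) (unew - u₀) : ℝ)) + 1 / (2 * k) * ‖unew - u₀‖ ^ 2 ≤
        E₁ u + (E₂ u₀ + (inner ℝ (g u₀) (u - u₀) : ℝ)) + 1 / (2 * k) * ‖u - u₀‖ ^ 2) :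
    E₁ unew + E₂ unew ≤ E₁ u₀ + E₂ u₀ :=
  stmt_3_general E₁ E₂ g k Λ hk hquad hkΛ u₀ unew hmin
end

section
/- Let E₁, E₂ : H → ℝ with E₂ Fréchet differentiable, E = E₁ + E₂, k > 0, and Λ ≥ 0 such that the quadratic upper bound holds. Let θ_{2,0}, θ_{2,1}, γ_{1,0}, γ_{2,0}, γ_{2,1} be real numbers satisfying: θ_{2,0}, θ_{2,1} ≥ 0; θ_{2,0} + θ_{2,1} = 1; γ_{2,0} + γ_{2,1} − kΛθ_{2,0} − kΛθ_{2,1} > 0; and γ_{1,0} − kΛ − (γ_{2,0} − kΛθ_{2,0})²/(γ_{2,0} + γ_{2,1} − kΛθ_{2,0} − kΛθ_{2,1}) ≥ 0. Let uₙ ∈ H, let U₁ be a global minimizer of u ↦ E₁(u) + L₂(u,uₙ) + (γ_{1,0}/(2k))‖u − uₙ‖², and let u_{n+1} be a global minimizer of u ↦ E₁(u) + θ_{2,1}L₂(u,U₁) + θ_{2,0}L₂(u,uₙ) + (γ_{2,0}/(2k))‖u − uₙ‖² + (γ_{2,1}/(2k))‖u − U₁‖². Then E(u_{n+1}) ≤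 E(uₙ). -/
/-!
Test the first stage against `uₙ` and the second against `U₁`. Bounding `E₂ u_{n+1}` by the
`θ`-average of the quadratic upper bounds around `U₁` and `uₙ`, and `θ₂₁ E₂ U₁` by the one
around `uₙ`, the linear terms cancel and `E(u_{n+1}) + Q/(2k) ≤ E(uₙ)`, where
`Q = a‖x‖² + b‖y‖² + c‖x - y‖²` with `x = u_{n+1} - uₙ`, `y = u_{n+1} - U₁` (so `x - y = U₁ - uₙ`),
`a = γ₂₀ - kΛθ₂₀`, `b = γ₂₁ - kΛθ₂₁`, `c = γ₁₀ - γ₂₀ - kΛθ₂₁`. The conditions on the coefficients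
say exactly that this quadratic form is positive semidefinite: `a + b > 0` and
`a² ≤ (a + b)(c + a)`, where `c + a = γ₁₀ - kΛ`.
-/

open scoped RealInnerProductSpace

section

variable {H : Type*} [NormedAddCommGroup H] [InnerProductSpace ℝ H]

theorem norm_sq_combination_nonneg (x y : H) {a b c : ℝ} (hab : 0 < a + b)
    (h : a ^ 2 ≤ (a + b) * (c + a)) :
    0 ≤ a * ‖x‖ ^ 2 + b * ‖y‖ ^ 2 + c * ‖x - y‖ ^ 2 := by
  have hcompleted : (a + b) * (a * ‖x‖ ^ 2 + b * ‖y‖ ^ 2 + c * ‖x - y‖ ^ 2)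
      = ‖a • x + b • y‖ ^ 2 + ((a + b) * (c + a) - a ^ 2) * ‖x - y‖ ^ 2 := by
    rw [norm_add_sq_real, norm_sub_sq_real, norm_smul, norm_smul, real_inner_smul_left,
      real_inner_smul_right, Real.norm_eq_abs, Real.norm_eq_abs, mul_pow, mul_pow, sq_abs, sq_abs]
    ring
  have hscaled : 0 ≤ (a + b) * (a * ‖x‖ ^ 2 + b * ‖y‖ ^ 2 + c * ‖x - y‖ ^ 2) := by
    rw [hcompleted]
    have := mul_nonneg (sub_nonneg.2 h) (sq_nonneg ‖x - y‖)
    positivity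
  exact (mul_nonneg_iff_of_pos_left hab).1 hscaled

def linearization (f : H → ℝ) (g : H → H) (p u : H) : ℝ :=
  f p + ⟪g p, u - p⟫

@[simp]
theorem linearization_self (f : H → ℝ) (g : H → H) (p : H) : linearization f g p p = f p := by
  simp [linearization]

theorem energy_add_le_of_two_stage_minimizers {E₁ E₂ : H → ℝ} {g : H → H} {Λ : ℝ}
    (hquad : ∀ u p, E₂ u ≤ linearization E₂ g p u + Λ / 2 * ‖u - p‖ ^ 2)
    {θ₂₀ θ₂₁ α₁₀ α₂₀ α₂₁ : ℝ} (hθ₀ : 0 ≤ θ₂₀) (hθ₁ : 0 ≤ θ₂₁) (hθsum : θ₂₀ + θ₂₁ = 1)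
    {uₙ U₁ unew : H}
    (hU₁ : ∀ u, E₁ U₁ + linearization E₂ g uₙ U₁ + α₁₀ * ‖U₁ - uₙ‖ ^ 2 ≤
      E₁ u + linearization E₂ g uₙ u + α₁₀ * ‖u - uₙ‖ ^ 2)
    (hunew : ∀ u, E₁ unew + θ₂₁ * linearization E₂ g U₁ unew + θ₂₀ * linearization E₂ g uₙ unew
        + α₂₀ * ‖unew - uₙ‖ ^ 2 + α₂₁ * ‖unew - U₁‖ ^ 2 ≤
      E₁ u + θ₂₁ * linearization E₂ g U₁ u + θ₂₀ * linearization E₂ g uₙ u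
        + α₂₀ * ‖u - uₙ‖ ^ 2 + α₂₁ * ‖u - U₁‖ ^ 2) :
    E₁ unew + E₂ unew + ((α₂₀ - Λ / 2 * θ₂₀) * ‖unew - uₙ‖ ^ 2
        + (α₂₁ - Λ / 2 * θ₂₁) * ‖unew - U₁‖ ^ 2 + (α₁₀ - α₂₀ - Λ / 2 * θ₂₁) * ‖U₁ - uₙ‖ ^ 2) ≤
      E₁ uₙ + E₂ uₙ := by
  have hstage₁ := hU₁ uₙ
  have hstage₂ := hunew U₁
  simp only [linearization_self, sub_self, norm_zero] at hstage₁ hstage₂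
  have hbound_new_at_U₁ := mul_le_mul_of_nonneg_left (hquad unew U₁) hθ₁
  have hbound_new_at_uₙ := mul_le_mul_of_nonneg_left (hquad unew uₙ) hθ₀
  have hbound_U₁_at_uₙ := mul_le_mul_of_nonneg_left (hquad U₁ uₙ) hθ₁
  obtain rfl : θ₂₀ = 1 - θ₂₁ := by linarith
  simp only [linearization] at *
  linarith

end

theorem stmt_6_general {H : Type*} [NormedAddCommGroup H] [InnerProductSpace ℝ H]
    (E₁ E₂ : H → ℝ) (g : H → H)
    (k Λ : ℝ) (hk : 0 < k)
    (hquad : ∀ u p : H, E₂ u ≤ E₂ p + (inner ℝ (g p) (u - p) : ℝ) + Λ / 2 * ‖u - p‖ ^ 2)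
    (θ₂₀ θ₂₁ γ₁₀ γ₂₀ γ₂₁ : ℝ)
    (hθ₀ : 0 ≤ θ₂₀) (hθ₁ : 0 ≤ θ₂₁) (hθsum : θ₂₀ + θ₂₁ = 1)
    (hden : 0 < γ₂₀ + γ₂₁ - k * Λ * θ₂₀ - k * Λ * θ₂₁)
    (hγ₁₀ : 0 ≤ γ₁₀ - k * Λ -
      (γ₂₀ - k * Λ * θ₂₀) ^ 2 / (γ₂₀ + γ₂₁ - k * Λ * θ₂₀ - k * Λ * θ₂₁))
    (uₙ U₁ unew : H)
    (hU₁ : ∀ u : H,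
      E₁ U₁ + (E₂ uₙ + (inner ℝ (g uₙ) (U₁ - uₙ) : ℝ)) + γ₁₀ / (2 * k) * ‖U₁ - uₙ‖ ^ 2 ≤
        E₁ u + (E₂ uₙ + (inner ℝ (g uₙ) (u - uₙ) : ℝ)) + γ₁₀ / (2 * k) * ‖u - uₙ‖ ^ 2)
    (hunew : ∀ u : H,
      E₁ unew + θ₂₁ * (E₂ U₁ + (inner ℝ (g U₁) (unew - U₁) : ℝ))
          + θ₂₀ * (E₂ uₙ + (inner ℝ (g uₙ) (unew - uₙ) : ℝ))
          + γ₂₀ / (2 * k) * ‖unew - uₙ‖ ^ 2 + γ₂₁ / (2 * k) * ‖unew - U₁‖ ^ 2 ≤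
        E₁ u + θ₂₁ * (E₂ U₁ + (inner ℝ (g U₁) (u - U₁) : ℝ))
          + θ₂₀ * (E₂ uₙ + (inner ℝ (g uₙ) (u - uₙ) : ℝ))
          + γ₂₀ / (2 * k) * ‖u - uₙ‖ ^ 2 + γ₂₁ / (2 * k) * ‖u - U₁‖ ^ 2) :
    E₁ unew + E₂ unew ≤ E₁ uₙ + E₂ uₙ := by
  have henergy := energy_add_le_of_two_stage_minimizers hquad hθ₀ hθ₁ hθsum hU₁ hunew
  have hdisc : (γ₂₀ - k * Λ * θ₂₀) ^ 2 ≤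
      (γ₂₀ + γ₂₁ - k * Λ * θ₂₀ - k * Λ * θ₂₁) * (γ₁₀ - k * Λ) := by
    rw [← div_le_iff₀' hden]
    linarith
  have hform := norm_sq_combination_nonneg (unew - uₙ) (unew - U₁)
    (a := γ₂₀ - k * Λ * θ₂₀) (b := γ₂₁ - k * Λ * θ₂₁) (c := γ₁₀ - γ₂₀ - k * Λ * θ₂₁)
    (by linarith) (by linear_combination hdisc
      + k * Λ * (γ₂₀ + γ₂₁ - k * Λ * θ₂₀ - k * Λ * θ₂₁) * hθsum)
  rw [sub_sub_sub_cancel_left] at hform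
  have hrescale : (γ₂₀ / (2 * k) - Λ / 2 * θ₂₀) * ‖unew - uₙ‖ ^ 2
        + (γ₂₁ / (2 * k) - Λ / 2 * θ₂₁) * ‖unew - U₁‖ ^ 2
        + (γ₁₀ / (2 * k) - γ₂₀ / (2 * k) - Λ / 2 * θ₂₁) * ‖U₁ - uₙ‖ ^ 2
      = ((γ₂₀ - k * Λ * θ₂₀) * ‖unew - uₙ‖ ^ 2 + (γ₂₁ - k * Λ * θ₂₁) * ‖unew - U₁‖ ^ 2
        + (γ₁₀ - γ₂₀ - k * Λ * θ₂₁) * ‖U₁ - uₙ‖ ^ 2) / (2 * k) := by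
    field_simp
  rw [hrescale] at henergy
  linarith [div_nonneg hform (by positivity : (0 : ℝ) ≤ 2 * k)]

/-- energy stability of the two-stage scheme (2.9)–(2.10) under the
conditions (2.11) on the coefficients. Here `g = ∇E₂` and
`L₂(u,p) = E₂(p) + ⟨g p, u − p⟩`. -/
theorem stmt_6 {H : Type*} [NormedAddCommGroup H] [InnerProductSpace ℝ H] [CompleteSpace H]
    (E₁ E₂ : H → ℝ) (g : H → H) (hgrad : ∀ x, HasGradientAt E₂ (g x) x)
    (k Λ : ℝ) (hk : 0 < k) (hΛ : 0 ≤ Λ)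
    (hquad : ∀ u p : H, E₂ u ≤ E₂ p + (inner ℝ (g p) (u - p) : ℝ) + Λ / 2 * ‖u - p‖ ^ 2)
    (θ₂₀ θ₂₁ γ₁₀ γ₂₀ γ₂₁ : ℝ)
    (hθ₀ : 0 ≤ θ₂₀) (hθ₁ : 0 ≤ θ₂₁) (hθsum : θ₂₀ + θ₂₁ = 1)
    (hden : 0 < γ₂₀ + γ₂₁ - k * Λ * θ₂₀ - k * Λ * θ₂₁)
    (hγ₁₀ : 0 ≤ γ₁₀ - k * Λ -
      (γ₂₀ - k * Λ * θ₂₀) ^ 2 / (γ₂₀ + γ₂₁ - k * Λ * θ₂₀ - k * Λ * θ₂₁))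
    (uₙ U₁ unew : H)
    (hU₁ : ∀ u : H,
      E₁ U₁ + (E₂ uₙ + (inner ℝ (g uₙ) (U₁ - uₙ) : ℝ)) + γ₁₀ / (2 * k) * ‖U₁ - uₙ‖ ^ 2 ≤
        E₁ u + (E₂ uₙ + (inner ℝ (g uₙ) (u - uₙ) : ℝ)) + γ₁₀ / (2 * k) * ‖u - uₙ‖ ^ 2)
    (hunew : ∀ u : H,
      E₁ unew + θ₂₁ * (E₂ U₁ + (inner ℝ (g U₁) (unew - U₁) : ℝ))
          + θ₂₀ * (E₂ uₙ + (inner ℝ (g uₙ) (unew - uₙ) : ℝ))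
          + γ₂₀ / (2 * k) * ‖unew - uₙ‖ ^ 2 + γ₂₁ / (2 * k) * ‖unew - U₁‖ ^ 2 ≤
        E₁ u + θ₂₁ * (E₂ U₁ + (inner ℝ (g U₁) (u - U₁) : ℝ))
          + θ₂₀ * (E₂ uₙ + (inner ℝ (g uₙ) (u - uₙ) : ℝ))
          + γ₂₀ / (2 * k) * ‖u - uₙ‖ ^ 2 + γ₂₁ / (2 * k) * ‖u - U₁‖ ^ 2) :
    E₁ unew + E₂ unew ≤ E₁ uₙ + E₂ uₙ :=
  stmt_6_general E₁ E₂ g k Λ hk hquad θ₂₀ θ₂₁ γ₁₀ γ₂₀ γ₂₁ hθ₀ hθ₁ hθsum hden hγ₁₀ uₙ U₁ unew hU₁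
    hunew
end

section
/- Let M ≥ 1 and let a_{m,i} ∈ ℝ be given for 1 ≤ m ≤ M, 0 ≤ i ≤ m−1. Define γ̃_{m,i} and S̃_{j,m} by the downward recursion γ̃_{m,i} = a_{m,i} − Σ_{j=m+1}^{M} γ̃_{j,i}(S̃_{j,m}/S̃_{j,j}) with S̃_{j,m} = Σ_{i=0}^{m−1} γ̃_{j,i}, and assume S̃_{j,j} ≠ 0 for all 1 ≤ j ≤ M. Then for every 1 ≤ m ≤ M: Σ_{j=m}^{M} S̃_{j,m}²/S̃_{j,j} = Σ_{i=0}^{m−1} a_{m,i}. -/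
/-! Summing the defining recursion of `γ̃ₘᵢ` over `i < m` and exchanging the order of summation
turns each correction term `Σᵢ γ̃ⱼᵢ S̃ⱼₘ / S̃ⱼⱼ` into `S̃ⱼₘ² / S̃ⱼⱼ`, so that
`S̃ₘₘ = Σᵢ aₘᵢ − Σ_{j>m} S̃ⱼₘ² / S̃ⱼⱼ`; the missing term `j = m` of the claimed sum is
`S̃ₘₘ² / S̃ₘₘ = S̃ₘₘ`. -/

open Finset

theorem Finset.sum_eq_sum_sub_sum_mul {ι κ : Type*} {s : Finset ι} {t : Finset κ}
    {g a : ι → ℝ} {γ : κ → ι → ℝ} {c : κ → ℝ}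
    (hg : ∀ i ∈ s, g i = a i - ∑ j ∈ t, γ j i * c j) :
    ∑ i ∈ s, g i = ∑ i ∈ s, a i - ∑ j ∈ t, (∑ i ∈ s, γ j i) * c j := by
  simp_rw [sum_congr rfl hg, sum_sub_distrib, sum_mul]
  rw [sum_comm]

theorem stmt_8_general (M : ℕ) (a γt St : ℕ → ℕ → ℝ)
    (hSt : ∀ j m : ℕ, St j m = ∑ i ∈ Finset.range m, γt j i)
    (hrec : ∀ m i : ℕ, 1 ≤ m → m ≤ M → i < m →
      γt m i = a m i - ∑ j ∈ Finset.Icc (m + 1) M, γt j i * (St j m / St j j))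
    (hSjj : ∀ j : ℕ, 1 ≤ j → j ≤ M → St j j ≠ 0) :
    ∀ m : ℕ, 1 ≤ m → m ≤ M →
      ∑ j ∈ Finset.Icc m M, St j m ^ 2 / St j j = ∑ i ∈ Finset.range m, a m i := by
  intro m hm1 hmM
  have hdiag : St m m = ∑ i ∈ range m, a m i - ∑ j ∈ Icc (m + 1) M, St j m ^ 2 / St j j := by
    rw [hSt m m, sum_eq_sum_sub_sum_mul fun i hi => hrec m i hm1 hmM (mem_range.mp hi)]
    simp_rw [← hSt, sq, mul_div_assoc]
  have hself : St m m ^ 2 / St m m = St m m := by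
    rw [sq, mul_div_cancel_right₀ _ (hSjj m hm1 hmM)]
  rw [← add_sum_Ioc_eq_sum_Icc hmM, ← Icc_add_one_left_eq_Ioc, hself, hdiag]
  ring

/-- for the auxiliary quantities defined by the downward recursion
`γ̃ₘᵢ = aₘᵢ − Σ_{j=m+1}^M γ̃ⱼᵢ (S̃ⱼₘ/S̃ⱼⱼ)`, `S̃ⱼₘ = Σ_{i<m} γ̃ⱼᵢ`, with `S̃ⱼⱼ ≠ 0`,
one has `Σ_{j=m}^M S̃ⱼₘ²/S̃ⱼⱼ = Σ_{i<m} aₘᵢ` for all `1 ≤ m ≤ M`. -/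
theorem stmt_8 (M : ℕ) (hM : 1 ≤ M) (a γt St : ℕ → ℕ → ℝ)
    (hSt : ∀ j m : ℕ, St j m = ∑ i ∈ Finset.range m, γt j i)
    (hrec : ∀ m i : ℕ, 1 ≤ m → m ≤ M → i < m →
      γt m i = a m i - ∑ j ∈ Finset.Icc (m + 1) M, γt j i * (St j m / St j j))
    (hSjj : ∀ j : ℕ, 1 ≤ j → j ≤ M → St j j ≠ 0) :
    ∀ m : ℕ, 1 ≤ m → m ≤ M →
      ∑ j ∈ Finset.Icc m M, St j m ^ 2 / St j j = ∑ i ∈ Finset.range m, a m i :=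
  stmt_8_general M a γt St hSt hrec hSjj
end

section
/- (Lemma 2.2 of the paper.) Let E₁, E₂ : H → ℝ with E₂ Fréchet differentiable, let k > 0 and Λ ≥ 0, let γ_{m,i}, θ_{m,i} be scheme coefficients with auxiliary quantities γ̃_{m,i}, S̃_{j,m} as defined by the downward recursion, and assume S̃_{j,j} ≠ 0 for all j and S̃_{j,m} ≠ 0 for all j ≥ m. Assume also Σ_{i=0}^{m−1} θ_{m,i} = 1. Then for any fixed 1 ≤ m ≤ M and fixed U₀,…,U_{m−1} ∈ H there is a constant c ∈ ℝ (independent of u) such that for all u ∈ H: E₁(u) + Σ_{i=0}^{m−1} θ_{m,i} L₂(u,U_i) + Σ_{i=0}^{m−1} (γ_{m,i}/(2k))‖u − U_i‖² = E₁(u) + Σ_{i=0}^{m−1} θ_{m,i}[L₂(u,U_i) + (Λ/2)‖u − U_i‖²] + (1/(2k)) Σ_{j=m}^{M} (S̃_{j,m}²/S̃_{j,j}) ‖u − Σ_{i=0}^{m−1} (γ̃_{j,i}/S̃_{j,m}) U_i‖² + c. In particular the two functionals have the same minimizers. -/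
/-- The stage functional of scheme (2.1):
`u ↦ E₁(u) + Σ_{i<m} θₘᵢ L₂(u,Uᵢ) + Σ_{i<m} (γₘᵢ/(2k))‖u − Uᵢ‖²`,
with `L₂(u,p) = E₂(p) + ⟨g p, u − p⟩` where `g = ∇E₂`. -/
noncomputable def stageFunc {H : Type*} [NormedAddCommGroup H] [InnerProductSpace ℝ H]
    (E₁ E₂ : H → ℝ) (g : H → H) (k : ℝ) (θ γ : ℕ → ℕ → ℝ) (m : ℕ) (U : ℕ → H) (u : H) : ℝ :=
  E₁ u + ∑ i ∈ Finset.range m, θ m i * (E₂ (U i) + (inner ℝ (g (U i)) (u - U i) : ℝ))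
    + ∑ i ∈ Finset.range m, γ m i / (2 * k) * ‖u - U i‖ ^ 2

/-- The rewritten stage functional appearing in Lemma 2.2, in terms of the auxiliary
quantities `γ̃ = γt` and `S̃ = St`. -/
noncomputable def stageFuncAux {H : Type*} [NormedAddCommGroup H] [InnerProductSpace ℝ H]
    (E₁ E₂ : H → ℝ) (g : H → H) (k Λ : ℝ) (θ γt St : ℕ → ℕ → ℝ) (M m : ℕ)
    (U : ℕ → H) (u : H) : ℝ :=
  E₁ u + ∑ i ∈ Finset.range m,
      θ m i * ((E₂ (U i) + (inner ℝ (g (U i)) (u - U i) : ℝ)) + Λ / 2 * ‖u - U i‖ ^ 2)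
    + 1 / (2 * k) * ∑ j ∈ Finset.Icc m M,
        St j m ^ 2 / St j j * ‖u - ∑ i ∈ Finset.range m, (γt j i / St j m) • U i‖ ^ 2

/-!
Both functionals are quadratic in `u` with the same non-quadratic part. A weighted sum
`∑ aᵢ ‖u - Pᵢ‖²` equals `(∑ aᵢ) ‖u‖² - 2 ⟪u, ∑ aᵢ • Pᵢ⟫` up to a constant, so two such sums
differ by a constant as soon as their total weights and first moments agree. For the weights
`γₘᵢ - kΛθₘᵢ` against `S̃ⱼₘ² / S̃ⱼⱼ`, both agreements are one identity: unfolding the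
recursion for `γ̃ₘᵢ` and exchanging the sums gives
`∑ᵢ (γₘᵢ - kΛθₘᵢ) xᵢ = ∑ⱼ (S̃ⱼₘ / S̃ⱼⱼ) ∑ᵢ γ̃ⱼᵢ xᵢ` for any vectors `xᵢ`, and `xᵢ = 1`
gives the weights.
-/

open Finset

section WeightedSquares

variable {H : Type*} [NormedAddCommGroup H] [InnerProductSpace ℝ H]

theorem sum_mul_norm_sub_sq {ι : Type*} (s : Finset ι) (a : ι → ℝ) (P : ι → H) (u : H) :
    ∑ i ∈ s, a i * ‖u - P i‖ ^ 2 =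
      (∑ i ∈ s, a i) * ‖u‖ ^ 2 - 2 * inner ℝ u (∑ i ∈ s, a i • P i)
        + ∑ i ∈ s, a i * ‖P i‖ ^ 2 := by
  have hexpand (i : ι) : a i * ‖u - P i‖ ^ 2 =
      a i * ‖u‖ ^ 2 - 2 * (a i * inner ℝ u (P i)) + a i * ‖P i‖ ^ 2 := by
    rw [norm_sub_sq_real]
    ring
  simp only [hexpand, sum_add_distrib, sum_sub_distrib, ← sum_mul, ← mul_sum, inner_sum,
    real_inner_smul_right]

theorem exists_sum_mul_norm_sub_sq_eq_add {ι κ : Type*} (s : Finset ι) (t : Finset κ)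
    (a : ι → ℝ) (P : ι → H) (b : κ → ℝ) (Q : κ → H)
    (hweight : ∑ i ∈ s, a i = ∑ j ∈ t, b j)
    (hmoment : ∑ i ∈ s, a i • P i = ∑ j ∈ t, b j • Q j) :
    ∃ c : ℝ, ∀ u : H, ∑ i ∈ s, a i * ‖u - P i‖ ^ 2 = ∑ j ∈ t, b j * ‖u - Q j‖ ^ 2 + c :=
  ⟨∑ i ∈ s, a i * ‖P i‖ ^ 2 - ∑ j ∈ t, b j * ‖Q j‖ ^ 2, fun u => by
    rw [sum_mul_norm_sub_sq, sum_mul_norm_sub_sq, hweight, hmoment]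
    ring⟩

end WeightedSquares

section DownwardRecursion

variable (a : ℕ → ℝ) (γt St : ℕ → ℕ → ℝ) {m M : ℕ}

theorem sum_smul_eq_of_downward_rec {E : Type*} [AddCommGroup E] [Module ℝ E]
    (hmM : m ≤ M) (hSmm : St m m ≠ 0)
    (hrec : ∀ i < m, γt m i = a i - ∑ j ∈ Icc (m + 1) M, γt j i * (St j m / St j j))
    (x : ℕ → E) :
    ∑ i ∈ range m, a i • x i =
      ∑ j ∈ Icc m M, (St j m / St j j) • ∑ i ∈ range m, γt j i • x i := by
  have hsplit : Icc m M = insert m (Icc (m + 1) M) := by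
    ext j; simp only [mem_Icc, mem_insert]; omega
  have ha : ∀ i ∈ range m,
      a i • x i = γt m i • x i + ∑ j ∈ Icc (m + 1) M, (γt j i * (St j m / St j j)) • x i := by
    intro i hi
    rw [← sum_smul, ← add_smul, hrec i (mem_range.mp hi), sub_add_cancel]
  rw [sum_congr rfl ha, sum_add_distrib, sum_comm, hsplit, sum_insert (by simp), div_self hSmm,
    one_smul]
  simp only [smul_sum, smul_smul, mul_comm]

theorem sum_eq_of_downward_rec (hmM : m ≤ M) (hSmm : St m m ≠ 0)
    (hrec : ∀ i < m, γt m i = a i - ∑ j ∈ Icc (m + 1) M, γt j i * (St j m / St j j))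
    (hSt : ∀ j, St j m = ∑ i ∈ range m, γt j i) :
    ∑ i ∈ range m, a i = ∑ j ∈ Icc m M, St j m ^ 2 / St j j := by
  have h := sum_smul_eq_of_downward_rec a γt St hmM hSmm hrec (fun _ => (1 : ℝ))
  simp only [smul_eq_mul, mul_one, ← hSt] at h
  rw [h]
  exact sum_congr rfl fun j _ => by ring

end DownwardRecursion

theorem stageFunc_sub_stageFuncAux {H : Type*} [NormedAddCommGroup H] [InnerProductSpace ℝ H]
    (E₁ E₂ : H → ℝ) (g : H → H) {k : ℝ} (hk : k ≠ 0) (Λ : ℝ) (θ γ γt St : ℕ → ℕ → ℝ)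
    (M m : ℕ) (U : ℕ → H) (u : H) :
    stageFunc E₁ E₂ g k θ γ m U u - stageFuncAux E₁ E₂ g k Λ θ γt St M m U u =
      (∑ i ∈ range m, (γ m i - k * Λ * θ m i) * ‖u - U i‖ ^ 2
        - ∑ j ∈ Icc m M, St j m ^ 2 / St j j *
            ‖u - ∑ i ∈ range m, (γt j i / St j m) • U i‖ ^ 2) / (2 * k) := by
  have hnear : ∑ i ∈ range m, γ m i / (2 * k) * ‖u - U i‖ ^ 2
        - ∑ i ∈ range m, θ m i * (Λ / 2 * ‖u - U i‖ ^ 2)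
      = (∑ i ∈ range m, (γ m i - k * Λ * θ m i) * ‖u - U i‖ ^ 2) / (2 * k) := by
    rw [← sum_sub_distrib, sum_div]
    exact sum_congr rfl fun i _ => by field_simp
  simp only [stageFunc, stageFuncAux, mul_add, sum_add_distrib]
  rw [sub_div, ← hnear, one_div_mul_eq_div]
  ring

theorem stmt_9_general {H : Type*} [NormedAddCommGroup H] [InnerProductSpace ℝ H]
    (E₁ E₂ : H → ℝ) (g : H → H)
    (k Λ : ℝ) (hk : 0 < k)
    (M : ℕ) (θ γ γt St : ℕ → ℕ → ℝ)
    (hSt : ∀ j m : ℕ, St j m = ∑ i ∈ Finset.range m, γt j i)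
    (hrec : ∀ m i : ℕ, 1 ≤ m → m ≤ M → i < m →
      γt m i = γ m i - k * Λ * θ m i - ∑ j ∈ Finset.Icc (m + 1) M, γt j i * (St j m / St j j))
    (hSjj : ∀ j : ℕ, 1 ≤ j → j ≤ M → St j j ≠ 0)
    (m : ℕ) (hm1 : 1 ≤ m) (hmM : m ≤ M) (U : ℕ → H) :
    (∃ c : ℝ, ∀ u : H,
        stageFunc E₁ E₂ g k θ γ m U u = stageFuncAux E₁ E₂ g k Λ θ γt St M m U u + c) ∧
      (∀ v : H,
        (∀ u : H, stageFunc E₁ E₂ g k θ γ m U v ≤ stageFunc E₁ E₂ g k θ γ m U u) ↔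
        (∀ u : H, stageFuncAux E₁ E₂ g k Λ θ γt St M m U v ≤
            stageFuncAux E₁ E₂ g k Λ θ γt St M m U u)) := by
  set a : ℕ → ℝ := fun i => γ m i - k * Λ * θ m i
  have hSmm : St m m ≠ 0 := hSjj m hm1 hmM
  have hrec' (i : ℕ) (hi : i < m) := hrec m i hm1 hmM hi
  have hmoment : ∑ i ∈ range m, a i • U i = ∑ j ∈ Icc m M, (St j m ^ 2 / St j j) •
      ∑ i ∈ range m, (γt j i / St j m) • U i := by
    rw [sum_smul_eq_of_downward_rec a γt St hmM hSmm hrec' U]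
    refine sum_congr rfl fun j _ => ?_
    by_cases hS : St j m = 0
    · simp [hS]
    · simp only [smul_sum, smul_smul]
      exact sum_congr rfl fun i _ => by field_simp
  obtain ⟨c, hc⟩ := exists_sum_mul_norm_sub_sq_eq_add _ _ a U _ _
    (sum_eq_of_downward_rec a γt St hmM hSmm hrec' (hSt · m)) hmoment
  have hconst (u : H) : stageFunc E₁ E₂ g k θ γ m U u =
      stageFuncAux E₁ E₂ g k Λ θ γt St M m U u + c / (2 * k) := by
    rw [← sub_eq_iff_eq_add', stageFunc_sub_stageFuncAux E₁ E₂ g hk.ne', hc u, add_sub_cancel_left]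
  exact ⟨⟨_, hconst⟩, fun v => by simp only [hconst, add_le_add_iff_right]⟩

/-- Lemma 2.2 of the paper: the stage functional equals the rewritten stage
functional up to an additive constant independent of `u`; in particular the two functionals
have the same minimizers. -/
theorem stmt_9 {H : Type*} [NormedAddCommGroup H] [InnerProductSpace ℝ H] [CompleteSpace H]
    (E₁ E₂ : H → ℝ) (g : H → H) (hgrad : ∀ x, HasGradientAt E₂ (g x) x)
    (k Λ : ℝ) (hk : 0 < k) (hΛ : 0 ≤ Λ)
    (M : ℕ) (hM : 1 ≤ M) (θ γ γt St : ℕ → ℕ → ℝ)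
    (hSt : ∀ j m : ℕ, St j m = ∑ i ∈ Finset.range m, γt j i)
    (hrec : ∀ m i : ℕ, 1 ≤ m → m ≤ M → i < m →
      γt m i = γ m i - k * Λ * θ m i - ∑ j ∈ Finset.Icc (m + 1) M, γt j i * (St j m / St j j))
    (hSjj : ∀ j : ℕ, 1 ≤ j → j ≤ M → St j j ≠ 0)
    (hSjm : ∀ m j : ℕ, 1 ≤ m → m ≤ j → j ≤ M → St j m ≠ 0)
    (hθsum : ∀ m : ℕ, 1 ≤ m → m ≤ M → ∑ i ∈ Finset.range m, θ m i = 1)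
    (m : ℕ) (hm1 : 1 ≤ m) (hmM : m ≤ M) (U : ℕ → H) :
    (∃ c : ℝ, ∀ u : H,
        stageFunc E₁ E₂ g k θ γ m U u = stageFuncAux E₁ E₂ g k Λ θ γt St M m U u + c) ∧
      (∀ v : H,
        (∀ u : H, stageFunc E₁ E₂ g k θ γ m U v ≤ stageFunc E₁ E₂ g k θ γ m U u) ↔
        (∀ u : H, stageFuncAux E₁ E₂ g k Λ θ γt St M m U v ≤
            stageFuncAux E₁ E₂ g k Λ θ γt St M m U u)) :=
  stmt_9_general E₁ E₂ g k Λ hk M θ γ γt St hSt hrec hSjj m hm1 hmM U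
end

section
/- (Lemma 2.3 of the paper.) Let E₁, E₂ : H → ℝ with E₂ Fréchet differentiable, let k > 0 and Λ ≥ 0 such that the quadratic upper bound holds, let γ_{m,i}, θ_{m,i} be scheme coefficients with auxiliary quantities γ̃_{m,i}, S̃_{j,m}, and assume: S̃_{m,m} > 0 for m = 1,…,M; S̃_{j,m} ≠ 0 whenever the quotients γ̃_{j,i}/S̃_{j,m} appear; θ_{m,i} ≥ 0 and θ_{m−1,i} ≥ θ_{m,i} for all applicable indices; and Σ_{i=0}^{m−1} θ_{m,i} = 1 for each m. Fix 2 ≤ m ≤ M and U₀,…,U_{m−1} ∈ H, and let U_m be a global minimizer over H of u ↦ E₁(u) + Σ_{i=0}^{m−1} θ_{m,i} L₂(u,U_i) + Σ_{i=0}^{m−1} (γ_{m,i}/(2k))‖u − U_i‖². Then: E₁(U_m) + Σ_{i=0}^{m−1} θ_{m,i}[L₂(U_m,U_i) + (Λ/2)‖U_m − U_i‖²] + (1/(2k))Σ_{j=m}^{M} (S̃_{j,m}²/S̃_{j,j})‖U_m − Σ_{i=0}^{m−1}(γ̃_{j,i}/S̃_{j,m})U_i‖² ≤ E₁(U_{m−1})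 + Σ_{i=0}^{m−2} θ_{m−1,i}[L₂(U_{m−1},U_i) + (Λ/2)‖U_{m−1} − U_i‖²] + (1/(2k))Σ_{j=m−1}^{M} (S̃_{j,m−1}²/S̃_{j,j})‖U_{m−1} − Σ_{i=0}^{m−2}(γ̃_{j,i}/S̃_{j,m−1})U_i‖². -/
open Finset

section WeightedMean

variable {ι H : Type*} [NormedAddCommGroup H] [InnerProductSpace ℝ H]
  (s : Finset ι) (c : ι → ℝ) (U : ι → H) {S : ℝ}

lemma smul_sum_div_smul (hS : S ≠ 0) : S • ∑ i ∈ s, (c i / S) • U i = ∑ i ∈ s, c i • U i := by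
  simp only [smul_sum, smul_smul, mul_div_cancel₀ _ hS]

lemma sq_div_mul_norm_sub_sum_div_smul_sq (hS : S ≠ 0) (T : ℝ) (u : H) :
    S ^ 2 / T * ‖u - ∑ i ∈ s, (c i / S) • U i‖ ^ 2
      = T⁻¹ * ‖S • u - ∑ i ∈ s, c i • U i‖ ^ 2 := by
  rw [← smul_sum_div_smul s c U hS, ← smul_sub, norm_smul, Real.norm_eq_abs, mul_pow, sq_abs]
  ring

lemma sum_mul_norm_sub_sq_eq_parallel_axis (hsum : ∑ i ∈ s, c i = S) (hS : S ≠ 0) (u : H) :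
    ∑ i ∈ s, c i * ‖u - U i‖ ^ 2
      = S * ‖u - ∑ i ∈ s, (c i / S) • U i‖ ^ 2
        + ∑ i ∈ s, c i * ‖U i - ∑ i ∈ s, (c i / S) • U i‖ ^ 2 := by
  set Ubar := ∑ i ∈ s, (c i / S) • U i
  have hbalance : ∑ i ∈ s, c i • (Ubar - U i) = 0 := by
    simp only [smul_sub, sum_sub_distrib, ← sum_smul, hsum]
    exact sub_eq_zero.2 (smul_sum_div_smul s c U hS)
  have hsplit : ∀ i, ‖u - U i‖ ^ 2
      = ‖u - Ubar‖ ^ 2 + 2 * inner ℝ (u - Ubar) (Ubar - U i) + ‖U i - Ubar‖ ^ 2 := fun i => by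
    rw [← sub_add_sub_cancel u Ubar (U i), norm_add_sq_real, norm_sub_rev Ubar]
  have hcross : ∑ i ∈ s, c i * inner ℝ (u - Ubar) (Ubar - U i) = 0 := by
    simp only [← real_inner_smul_right, ← inner_sum, hbalance, inner_zero_right]
  calc ∑ i ∈ s, c i * ‖u - U i‖ ^ 2
      = (∑ i ∈ s, c i) * ‖u - Ubar‖ ^ 2 + 2 * ∑ i ∈ s, c i * inner ℝ (u - Ubar) (Ubar - U i)
          + ∑ i ∈ s, c i * ‖U i - Ubar‖ ^ 2 := by
        simp only [hsplit, mul_add, sum_add_distrib, sum_mul, mul_sum]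
        congr 2
        exact sum_congr rfl fun i _ => by ring
    _ = S * ‖u - Ubar‖ ^ 2 + ∑ i ∈ s, c i * ‖U i - Ubar‖ ^ 2 := by
        rw [hsum, hcross, mul_zero, add_zero]

end WeightedMean

lemma sum_range_succ_mul_le_sum_range_mul (a b f : ℕ → ℝ) (n : ℕ)
    (hsum : ∑ i ∈ range (n + 1), a i = ∑ i ∈ range n, b i) (hab : ∀ i < n, a i ≤ b i)
    (hf : ∀ i < n, f n ≤ f i) :
    ∑ i ∈ range (n + 1), a i * f i ≤ ∑ i ∈ range n, b i * f i := by
  have hlast : a n = ∑ i ∈ range n, (b i - a i) := by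
    rw [sum_range_succ] at hsum
    rw [sum_sub_distrib]
    linarith
  rw [sum_range_succ]
  calc ∑ i ∈ range n, a i * f i + a n * f n
      = ∑ i ∈ range n, a i * f i + ∑ i ∈ range n, (b i - a i) * f n := by rw [hlast, sum_mul]
    _ ≤ ∑ i ∈ range n, a i * f i + ∑ i ∈ range n, (b i - a i) * f i := by
        gcongr with i hi
        · exact sub_nonneg.2 (hab i (mem_range.1 hi))
        · exact hf i (mem_range.1 hi)
    _ = ∑ i ∈ range n, b i * f i := by
        rw [← sum_add_distrib]
        exact sum_congr rfl fun i _ => by ring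

section StageFunctionals

variable {H : Type*} [NormedAddCommGroup H] [InnerProductSpace ℝ H]
  (E₁ E₂ : H → ℝ) (g : H → H) (k Λ : ℝ) (θ γ γt St : ℕ → ℕ → ℝ) (M m : ℕ) (U : ℕ → H)

lemma exists_stageFunc_eq_stageFuncAux_add (hk : k ≠ 0) (hmM : m ≤ M)
    (hSt : ∀ j ∈ Icc m M, ∑ i ∈ range m, γt j i = St j m)
    (hS : ∀ j ∈ Icc m M, St j m ≠ 0)
    (hrec : ∀ i < m,
      γt m i = γ m i - k * Λ * θ m i - ∑ j ∈ Icc (m + 1) M, γt j i * (St j m / St j j)) :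
    ∃ C, ∀ u, stageFunc E₁ E₂ g k θ γ m U u = stageFuncAux E₁ E₂ g k Λ θ γt St M m U u + C := by
  set Ubar : ℕ → H := fun j => ∑ i ∈ range m, (γt j i / St j m) • U i
  refine ⟨1 / (2 * k) * ∑ j ∈ Icc m M,
    St j m / St j j * ∑ i ∈ range m, γt j i * ‖U i - Ubar j‖ ^ 2, fun u => ?_⟩
  have hweights : ∀ i < m,
      γ m i - k * Λ * θ m i = ∑ j ∈ Icc m M, St j m / St j j * γt j i := fun i hi => by
    rw [← insert_Icc_add_one_left_eq_Icc hmM, sum_insert (by simp),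
      div_self (hS m (left_mem_Icc.2 hmM)), one_mul, hrec i hi]
    simp only [mul_comm (γt _ i)]
    ring
  have hprox : ∑ i ∈ range m, (γ m i - k * Λ * θ m i) * ‖u - U i‖ ^ 2
      = ∑ j ∈ Icc m M, St j m ^ 2 / St j j * ‖u - Ubar j‖ ^ 2
        + ∑ j ∈ Icc m M, St j m / St j j * ∑ i ∈ range m, γt j i * ‖U i - Ubar j‖ ^ 2 := by
    calc ∑ i ∈ range m, (γ m i - k * Λ * θ m i) * ‖u - U i‖ ^ 2
        = ∑ j ∈ Icc m M, St j m / St j j * ∑ i ∈ range m, γt j i * ‖u - U i‖ ^ 2 := by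
          rw [sum_congr rfl fun i hi => by rw [hweights i (mem_range.1 hi), sum_mul], sum_comm]
          simp only [mul_sum, mul_assoc]
      _ = _ := by
          rw [← sum_add_distrib]
          refine sum_congr rfl fun j hj => ?_
          rw [sum_mul_norm_sub_sq_eq_parallel_axis _ _ _ (hSt j hj) (hS j hj)]
          ring
  have hsplit : ∑ i ∈ range m, γ m i / (2 * k) * ‖u - U i‖ ^ 2
      = ∑ i ∈ range m, θ m i * (Λ / 2 * ‖u - U i‖ ^ 2)
        + 1 / (2 * k) * ∑ i ∈ range m, (γ m i - k * Λ * θ m i) * ‖u - U i‖ ^ 2 := by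
    rw [mul_sum, ← sum_add_distrib]
    exact sum_congr rfl fun i _ => by field_simp; ring
  simp only [stageFunc, stageFuncAux, hsplit, hprox, mul_add, sum_add_distrib]
  ring

lemma stageFuncAux_succ_le (hk : 0 ≤ k)
    (hquad : ∀ u p : H, E₂ u ≤ E₂ p + inner ℝ (g p) (u - p) + Λ / 2 * ‖u - p‖ ^ 2)
    (n : ℕ) (hSt : ∀ j ∈ Icc (n + 1) M, St j (n + 1) = St j n + γt j n)
    (hSn : ∀ j ∈ Icc (n + 1) M, St j n ≠ 0) (hSsucc : ∀ j ∈ Icc (n + 1) M, St j (n + 1) ≠ 0)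
    (hSnn : 0 ≤ St n n)
    (hθsum : ∑ i ∈ range (n + 1), θ (n + 1) i = ∑ i ∈ range n, θ n i)
    (hθmono : ∀ i < n, θ (n + 1) i ≤ θ n i) :
    stageFuncAux E₁ E₂ g k Λ θ γt St M (n + 1) U (U n)
      ≤ stageFuncAux E₁ E₂ g k Λ θ γt St M n U (U n) := by
  have hlin : ∑ i ∈ range (n + 1), θ (n + 1) i *
        ((E₂ (U i) + inner ℝ (g (U i)) (U n - U i)) + Λ / 2 * ‖U n - U i‖ ^ 2)
      ≤ ∑ i ∈ range n, θ n i *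
        ((E₂ (U i) + inner ℝ (g (U i)) (U n - U i)) + Λ / 2 * ‖U n - U i‖ ^ 2) := by
    refine sum_range_succ_mul_le_sum_range_mul _ _ _ n hθsum hθmono fun i _ => ?_
    simpa using hquad (U n) (U i)
  have hterm : ∀ j ∈ Icc (n + 1) M,
      St j (n + 1) ^ 2 / St j j * ‖U n - ∑ i ∈ range (n + 1), (γt j i / St j (n + 1)) • U i‖ ^ 2
        = St j n ^ 2 / St j j * ‖U n - ∑ i ∈ range n, (γt j i / St j n) • U i‖ ^ 2 :=
    fun j hj => by
      rw [sq_div_mul_norm_sub_sum_div_smul_sq _ _ _ (hSsucc j hj),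
        sq_div_mul_norm_sub_sum_div_smul_sq _ _ _ (hSn j hj), sum_range_succ, hSt j hj, add_smul,
        add_sub_add_right_eq_sub]
  have hprox : ∑ j ∈ Icc (n + 1) M,
        St j (n + 1) ^ 2 / St j j * ‖U n - ∑ i ∈ range (n + 1), (γt j i / St j (n + 1)) • U i‖ ^ 2
      ≤ ∑ j ∈ Icc n M, St j n ^ 2 / St j j * ‖U n - ∑ i ∈ range n, (γt j i / St j n) • U i‖ ^ 2 := by
    rw [sum_congr rfl hterm]
    refine sum_le_sum_of_subset_of_nonneg (Icc_subset_Icc_left n.le_succ) fun j hj hj' => ?_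
    obtain rfl : j = n := by simp only [mem_Icc] at hj hj'; omega
    exact mul_nonneg (div_nonneg (sq_nonneg _) hSnn) (sq_nonneg _)
  unfold stageFuncAux
  gcongr

end StageFunctionals

theorem stmt_12_general {H : Type*} [NormedAddCommGroup H] [InnerProductSpace ℝ H]
    (E₁ E₂ : H → ℝ) (g : H → H)
    (k Λ : ℝ) (hk : 0 < k)
    (hquad : ∀ u p : H, E₂ u ≤ E₂ p + (inner ℝ (g p) (u - p) : ℝ) + Λ / 2 * ‖u - p‖ ^ 2)
    (M : ℕ) (θ γ γt St : ℕ → ℕ → ℝ)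
    (hSt : ∀ j m : ℕ, St j m = ∑ i ∈ Finset.range m, γt j i)
    (hrec : ∀ m i : ℕ, 1 ≤ m → m ≤ M → i < m →
      γt m i = γ m i - k * Λ * θ m i - ∑ j ∈ Finset.Icc (m + 1) M, γt j i * (St j m / St j j))
    (hSmm : ∀ m : ℕ, 1 ≤ m → m ≤ M → 0 < St m m)
    (hSjm : ∀ m j : ℕ, 1 ≤ m → m ≤ j → j ≤ M → St j m ≠ 0)
    (hθmono : ∀ m i : ℕ, 2 ≤ m → m ≤ M → i < m - 1 → θ m i ≤ θ (m - 1) i)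
    (hθsum : ∀ m : ℕ, 1 ≤ m → m ≤ M → ∑ i ∈ Finset.range m, θ m i = 1)
    (m : ℕ) (hm2 : 2 ≤ m) (hmM : m ≤ M) (U : ℕ → H)
    (hmin : ∀ u : H, stageFunc E₁ E₂ g k θ γ m U (U m) ≤ stageFunc E₁ E₂ g k θ γ m U u) :
    stageFuncAux E₁ E₂ g k Λ θ γt St M m U (U m) ≤
      stageFuncAux E₁ E₂ g k Λ θ γt St M (m - 1) U (U (m - 1)) := by
  obtain ⟨n, rfl⟩ : ∃ n, m = n + 1 := ⟨m - 1, by omega⟩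
  rw [Nat.add_sub_cancel]
  have hS : ∀ m', 1 ≤ m' → ∀ j ∈ Icc m' M, St j m' ≠ 0 := fun m' hm' j hj =>
    hSjm m' j hm' (mem_Icc.1 hj).1 (mem_Icc.1 hj).2
  obtain ⟨C, hC⟩ := exists_stageFunc_eq_stageFuncAux_add E₁ E₂ g k Λ θ γ γt St M (n + 1) U
    hk.ne' hmM (fun j _ => (hSt j _).symm) (hS _ n.succ_pos)
    fun i hi => hrec _ i n.succ_pos hmM hi
  have hstage : stageFuncAux E₁ E₂ g k Λ θ γt St M (n + 1) U (U (n + 1))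
      ≤ stageFuncAux E₁ E₂ g k Λ θ γt St M (n + 1) U (U n) := by
    simpa only [hC, add_le_add_iff_right] using hmin (U n)
  refine hstage.trans (stageFuncAux_succ_le E₁ E₂ g k Λ θ γt St M U hk.le hquad n
    (fun j _ => by rw [hSt, hSt, sum_range_succ])
    (fun j hj => hS n (by omega) j (Icc_subset_Icc_left n.le_succ hj))
    (hS _ n.succ_pos) (hSmm n (by omega) (by omega)).le
    (by rw [hθsum _ n.succ_pos hmM, hθsum n (by omega) (by omega)])
    fun i hi => hθmono (n + 1) i (by omega) hmM (by omega))

/-- Lemma 2.3 of the paper: if `U m` is a global minimizer of the `m`-th stage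
functional, then the rewritten stage functional decreases from stage `m − 1` to stage `m`. -/
theorem stmt_12 {H : Type*} [NormedAddCommGroup H] [InnerProductSpace ℝ H] [CompleteSpace H]
    (E₁ E₂ : H → ℝ) (g : H → H) (hgrad : ∀ x, HasGradientAt E₂ (g x) x)
    (k Λ : ℝ) (hk : 0 < k) (hΛ : 0 ≤ Λ)
    (hquad : ∀ u p : H, E₂ u ≤ E₂ p + (inner ℝ (g p) (u - p) : ℝ) + Λ / 2 * ‖u - p‖ ^ 2)
    (M : ℕ) (hM : 1 ≤ M) (θ γ γt St : ℕ → ℕ → ℝ)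
    (hSt : ∀ j m : ℕ, St j m = ∑ i ∈ Finset.range m, γt j i)
    (hrec : ∀ m i : ℕ, 1 ≤ m → m ≤ M → i < m →
      γt m i = γ m i - k * Λ * θ m i - ∑ j ∈ Finset.Icc (m + 1) M, γt j i * (St j m / St j j))
    (hSmm : ∀ m : ℕ, 1 ≤ m → m ≤ M → 0 < St m m)
    (hSjm : ∀ m j : ℕ, 1 ≤ m → m ≤ j → j ≤ M → St j m ≠ 0)
    (hθnonneg : ∀ m i : ℕ, 1 ≤ m → m ≤ M → i < m → 0 ≤ θ m i)
    (hθmono : ∀ m i : ℕ, 2 ≤ m → m ≤ M → i < m - 1 → θ m i ≤ θ (m - 1) i)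
    (hθsum : ∀ m : ℕ, 1 ≤ m → m ≤ M → ∑ i ∈ Finset.range m, θ m i = 1)
    (m : ℕ) (hm2 : 2 ≤ m) (hmM : m ≤ M) (U : ℕ → H)
    (hmin : ∀ u : H, stageFunc E₁ E₂ g k θ γ m U (U m) ≤ stageFunc E₁ E₂ g k θ γ m U u) :
    stageFuncAux E₁ E₂ g k Λ θ γt St M m U (U m) ≤
      stageFuncAux E₁ E₂ g k Λ θ γt St M (m - 1) U (U (m - 1)) :=
  stmt_12_general E₁ E₂ g k Λ hk hquad M θ γ γt St hSt hrec hSmm hSjm hθmono hθsum m hm2 hmM U hmin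
end

section
/- (Theorem 2.1 of the paper: energy stability of the multistage ARK IMEX scheme.) Let E₁, E₂ : H → ℝ with E₂ Fréchet differentiable, let E = E₁ + E₂, let k > 0 and Λ ≥ 0 such that the quadratic upper bound holds, and let γ_{m,i}, θ_{m,i} (1 ≤ m ≤ M, 0 ≤ i ≤ m−1) be scheme coefficients with auxiliary quantities γ̃_{m,i}, S̃_{j,m}. Assume: S̃_{m,m} > 0 for m = 1,…,M; S̃_{j,m} ≠ 0 whenever the quotients γ̃_{j,i}/S̃_{j,m} appear; θ_{m,i} ≥ 0 and θ_{m−1,i} ≥ θ_{m,i} for all applicable i; and Σ_{i=0}^{m−1} θ_{m,i} = 1 for each m. Let U₀ ∈ H and, for m = 1,…,M, let U_m be a global minimizer over H of the stage functional u ↦ E₁(u) + Σ_{i=0}^{m−1} θ_{m,i} L₂(u,U_i) + Σ_{i=0}^{m−1} (γ_{m,i}/(2k))‖u − U_i‖². Then E(U_M) ≤ E(U₀). -/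
/-! Downward induction on the modified energy
`stageFunc m (U m) - (2k)⁻¹ ∑_{j=m}^{M} D_j(m) / S̃_{j,j}`, where
`D_j(m) = ∑_{i<l<m} γ̃_{j,i} γ̃_{j,l} ‖U_l - U_i‖²` is the weighted dispersion of the first `m`
stages. The weighted Lagrange identity `S ∑ wᵢ ‖u - Vᵢ‖² = ‖∑ wᵢ (u - Vᵢ)‖² + D` together with
`S̃_{m,m} > 0` gives `D_m(m) / S̃_{m,m} ≤ ∑ᵢ γ̃_{m,i} ‖U_m - U_i‖²`. Comparing `U_{m+1}` with the
competitor `U_m` in the `(m+1)`-st stage functional, and bounding `E₂(U_m)` by the quadratic upper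
bound at each `U_i` with weight `θ_{m,i} - θ_{m+1,i} ≥ 0`, the recursion for `γ̃` makes the
modified energy non-increasing in `m`. At `m = M` it dominates `E(U_M)`; at `m = 1` all dispersions
vanish and `stageFunc 1 (U 1) ≤ stageFunc 1 (U 0) = E(U_0)`.
-/

open Finset

section Dispersion

variable {H : Type*} [NormedAddCommGroup H]

noncomputable def dispersion (w : ℕ → ℝ) (V : ℕ → H) (m : ℕ) : ℝ :=
  ∑ l ∈ range m, ∑ i ∈ range l, w i * w l * ‖V l - V i‖ ^ 2

lemma dispersion_succ (w : ℕ → ℝ) (V : ℕ → H) (m : ℕ) :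
    dispersion w V (m + 1) = dispersion w V m + ∑ i ∈ range m, w i * w m * ‖V m - V i‖ ^ 2 :=
  sum_range_succ _ _

@[simp]
lemma dispersion_one (w : ℕ → ℝ) (V : ℕ → H) : dispersion w V 1 = 0 := by
  simp [dispersion]

lemma sum_dispersion_succ_div (T : Finset ℕ) (w : ℕ → ℕ → ℝ) (S : ℕ → ℝ) (V : ℕ → H) (m : ℕ) :
    ∑ j ∈ T, dispersion (w j) V (m + 1) / S j
      = ∑ j ∈ T, dispersion (w j) V m / S j
        + ∑ i ∈ range m, (∑ j ∈ T, w j i * w j m / S j) * ‖V m - V i‖ ^ 2 := by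
  simp only [dispersion_succ, add_div, sum_add_distrib, sum_div, sum_mul]
  rw [sum_comm]
  congr 1
  exact sum_congr rfl fun j _ => sum_congr rfl fun i _ => by ring

variable [InnerProductSpace ℝ H]

/-- A weighted Lagrange identity; the weights may have any sign. -/
lemma sum_mul_sum_mul_norm_sub_sq (w : ℕ → ℝ) (V : ℕ → H) (u : H) (m : ℕ) :
    (∑ i ∈ range m, w i) * ∑ i ∈ range m, w i * ‖u - V i‖ ^ 2
      = ‖∑ i ∈ range m, w i • (u - V i)‖ ^ 2 + dispersion w V m := by
  induction m with
  | zero => simp [dispersion]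
  | succ m ih =>
    have hcross : ∑ i ∈ range m, w i * ‖V m - V i‖ ^ 2
        = ∑ i ∈ range m, w i * ‖u - V i‖ ^ 2
          - 2 * inner ℝ (∑ i ∈ range m, w i • (u - V i)) (u - V m)
          + (∑ i ∈ range m, w i) * ‖u - V m‖ ^ 2 := by
      rw [sum_inner, mul_sum, sum_mul, ← sum_sub_distrib, ← sum_add_distrib]
      refine sum_congr rfl fun i _ => ?_
      rw [show V m - V i = (u - V i) - (u - V m) by abel, norm_sub_sq_real,
        real_inner_smul_left]
      ring
    have hcross' : ∑ i ∈ range m, w i * w m * ‖V m - V i‖ ^ 2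
        = w m * ∑ i ∈ range m, w i * ‖V m - V i‖ ^ 2 := by
      rw [mul_sum]; exact sum_congr rfl fun i _ => by ring
    rw [sum_range_succ, sum_range_succ, sum_range_succ, dispersion_succ, hcross', hcross,
      norm_add_sq_real, real_inner_smul_right, norm_smul, Real.norm_eq_abs, mul_pow, sq_abs]
    linear_combination ih

lemma dispersion_div_sum_le (w : ℕ → ℝ) (V : ℕ → H) (u : H) {m : ℕ}
    (hw : 0 < ∑ i ∈ range m, w i) :
    dispersion w V m / ∑ i ∈ range m, w i ≤ ∑ i ∈ range m, w i * ‖u - V i‖ ^ 2 := by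
  rw [div_le_iff₀' hw, sum_mul_sum_mul_norm_sub_sq w V u]
  exact le_add_of_nonneg_left (sq_nonneg _)

end Dispersion

lemma inv_two_mul_sum_sub_mul {k Λ : ℝ} (hk : k ≠ 0) {ι : Type*} (s : Finset ι) (c t d : ι → ℝ) :
    (2 * k)⁻¹ * ∑ i ∈ s, (c i - k * Λ * t i) * d i
      = ∑ i ∈ s, c i / (2 * k) * d i - Λ / 2 * ∑ i ∈ s, t i * d i := by
  rw [mul_sum, mul_sum, ← sum_sub_distrib]
  exact sum_congr rfl fun i _ => by field_simp

section Stages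

variable {H : Type*} [NormedAddCommGroup H] [InnerProductSpace ℝ H]
  {E₁ E₂ : H → ℝ} {g : H → H} {k Λ : ℝ} {θ γ : ℕ → ℕ → ℝ} {U : ℕ → H}

lemma sum_mul_le_sum_mul_linearization
    (hquad : ∀ u p : H, E₂ u ≤ E₂ p + (inner ℝ (g p) (u - p) : ℝ) + Λ / 2 * ‖u - p‖ ^ 2)
    {ι : Type*} (s : Finset ι) (c : ι → ℝ) (hc : ∀ i ∈ s, 0 ≤ c i) (p : ι → H) (u : H) :
    (∑ i ∈ s, c i) * E₂ u
      ≤ ∑ i ∈ s, c i * (E₂ (p i) + (inner ℝ (g (p i)) (u - p i) : ℝ))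
        + Λ / 2 * ∑ i ∈ s, c i * ‖u - p i‖ ^ 2 := by
  rw [sum_mul, mul_sum, ← sum_add_distrib]
  exact sum_le_sum fun i hi => by
    nlinarith [mul_le_mul_of_nonneg_left (hquad u (p i)) (hc i hi)]

lemma add_le_stageFunc (hk : k ≠ 0)
    (hquad : ∀ u p : H, E₂ u ≤ E₂ p + (inner ℝ (g p) (u - p) : ℝ) + Λ / 2 * ‖u - p‖ ^ 2)
    (m : ℕ) (hθ : ∀ i < m, 0 ≤ θ m i) (hθsum : ∑ i ∈ range m, θ m i = 1) (u : H) :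
    E₁ u + E₂ u + (2 * k)⁻¹ * ∑ i ∈ range m, (γ m i - k * Λ * θ m i) * ‖u - U i‖ ^ 2
      ≤ stageFunc E₁ E₂ g k θ γ m U u := by
  have hlin := sum_mul_le_sum_mul_linearization hquad (range m) (θ m)
    (fun i hi => hθ i (mem_range.mp hi)) U u
  rw [hθsum, one_mul] at hlin
  rw [inv_two_mul_sum_sub_mul hk _ (γ m) (θ m), stageFunc]
  linarith

/-- Passing from stage `m` to stage `m + 1` at `U m`, the new weight `θ (m+1) m` on `E₂ (U m)`
is paid for by the weight `θ m i - θ (m+1) i` released by each earlier linearization. -/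
lemma stageFunc_succ_self_le (hk : k ≠ 0)
    (hquad : ∀ u p : H, E₂ u ≤ E₂ p + (inner ℝ (g p) (u - p) : ℝ) + Λ / 2 * ‖u - p‖ ^ 2)
    (m : ℕ) (hθmono : ∀ i < m, θ (m + 1) i ≤ θ m i)
    (hθsum : ∑ i ∈ range (m + 1), θ (m + 1) i = ∑ i ∈ range m, θ m i) :
    stageFunc E₁ E₂ g k θ γ (m + 1) U (U m)
      ≤ stageFunc E₁ E₂ g k θ γ m U (U m)
        + (2 * k)⁻¹ * ∑ i ∈ range m, ((γ (m + 1) i - k * Λ * θ (m + 1) i)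
            - (γ m i - k * Λ * θ m i)) * ‖U m - U i‖ ^ 2 := by
  have hlin := sum_mul_le_sum_mul_linearization hquad (range m) (fun i => θ m i - θ (m + 1) i)
    (fun i hi => sub_nonneg.mpr (hθmono i (mem_range.mp hi))) U (U m)
  have hweight : ∑ i ∈ range m, (θ m i - θ (m + 1) i) = θ (m + 1) m := by
    rw [sum_range_succ] at hθsum
    rw [sum_sub_distrib]
    linarith
  simp only [hweight, sub_mul, sum_sub_distrib] at hlin
  have hsplit : ∑ i ∈ range m, ((γ (m + 1) i - k * Λ * θ (m + 1) i)
        - (γ m i - k * Λ * θ m i)) * ‖U m - U i‖ ^ 2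
      = ∑ i ∈ range m, (γ (m + 1) i - k * Λ * θ (m + 1) i) * ‖U m - U i‖ ^ 2
        - ∑ i ∈ range m, (γ m i - k * Λ * θ m i) * ‖U m - U i‖ ^ 2 := by
    rw [← sum_sub_distrib]
    exact sum_congr rfl fun i _ => sub_mul _ _ _
  rw [hsplit, mul_sub, inv_two_mul_sum_sub_mul hk _ (γ (m + 1)) (θ (m + 1)),
    inv_two_mul_sum_sub_mul hk _ (γ m) (θ m), stageFunc, stageFunc, sum_range_succ, sum_range_succ,
    sub_self, inner_zero_right, norm_zero]
  linarith

end Stages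

/-- Both rows are `a m i = ∑ j ∈ Icc m M, γt j i * (St j m / St j j)`, the `j = m` term being
`γt m i`, and `St j (m + 1) - St j m = γt j m`. -/
lemma sub_eq_sum_sub_of_rec (a γt St : ℕ → ℕ → ℝ) (M : ℕ)
    (hSt : ∀ j m : ℕ, St j m = ∑ i ∈ range m, γt j i)
    (hrec : ∀ m i : ℕ, 1 ≤ m → m ≤ M → i < m →
      γt m i = a m i - ∑ j ∈ Icc (m + 1) M, γt j i * (St j m / St j j))
    {m i : ℕ} (hm : 1 ≤ m) (hmM : m < M) (hi : i < m) (hS : St (m + 1) (m + 1) ≠ 0) :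
    a (m + 1) i - a m i = ∑ j ∈ Icc (m + 1) M, γt j i * γt j m / St j j - γt m i := by
  have hcol : ∀ j, γt j m = St j (m + 1) - St j m := fun j => by
    rw [hSt, hSt, sum_range_succ]; ring
  have hnext : ∑ j ∈ Icc (m + 1) M, γt j i * (St j (m + 1) / St j j)
      = a (m + 1) i := by
    rw [← insert_Icc_add_one_left_eq_Icc (by omega : m + 1 ≤ M), sum_insert (by simp),
      div_self hS, mul_one, hrec (m + 1) i (by omega) hmM (by omega)]
    ring
  have hcur := hrec m i hm hmM.le hi
  simp only [hcol, mul_sub, sub_div, sum_sub_distrib, mul_div_assoc] at hcur ⊢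
  linarith

lemma energy_le_stageFunc_sub_dispersion {H : Type*} [NormedAddCommGroup H]
    [InnerProductSpace ℝ H] {E₁ E₂ : H → ℝ} {g : H → H} {k Λ : ℝ} (hk : 0 < k)
    (hquad : ∀ u p : H, E₂ u ≤ E₂ p + (inner ℝ (g p) (u - p) : ℝ) + Λ / 2 * ‖u - p‖ ^ 2)
    {M : ℕ} {θ γ γt St : ℕ → ℕ → ℝ}
    (hSt : ∀ j m : ℕ, St j m = ∑ i ∈ range m, γt j i)
    (hrec : ∀ m i : ℕ, 1 ≤ m → m ≤ M → i < m →
      γt m i = γ m i - k * Λ * θ m i - ∑ j ∈ Icc (m + 1) M, γt j i * (St j m / St j j))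
    (hSmm : ∀ m : ℕ, 1 ≤ m → m ≤ M → 0 < St m m)
    (hθnonneg : ∀ m i : ℕ, 1 ≤ m → m ≤ M → i < m → 0 ≤ θ m i)
    (hθmono : ∀ m i : ℕ, 2 ≤ m → m ≤ M → i < m - 1 → θ m i ≤ θ (m - 1) i)
    (hθsum : ∀ m : ℕ, 1 ≤ m → m ≤ M → ∑ i ∈ range m, θ m i = 1)
    {U : ℕ → H}
    (hmin : ∀ m : ℕ, 1 ≤ m → m ≤ M →
      ∀ u : H, stageFunc E₁ E₂ g k θ γ m U (U m) ≤ stageFunc E₁ E₂ g k θ γ m U u)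
    {m : ℕ} (hm : 1 ≤ m) (hmM : m ≤ M) :
    E₁ (U M) + E₂ (U M) ≤ stageFunc E₁ E₂ g k θ γ m U (U m)
      - (2 * k)⁻¹ * ∑ j ∈ Icc m M, dispersion (γt j) U m / St j j := by
  have hk₀ : k ≠ 0 := hk.ne'
  have hvar : ∀ m, 1 ≤ m → m ≤ M → dispersion (γt m) U m / St m m
      ≤ ∑ i ∈ range m, γt m i * ‖U m - U i‖ ^ 2 := fun m hm hmM => by
    simpa only [hSt] using dispersion_div_sum_le (γt m) U (U m) (hSt m m ▸ hSmm m hm hmM)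
  refine Nat.decreasingInduction' (fun m hmM hle ih => ?_) hmM ?_
  · have hstep := stageFunc_succ_self_le (E₁ := E₁) (U := U) (γ := γ) hk₀ hquad m
      (fun i hi => by simpa using hθmono (m + 1) i (by omega) hmM (by omega))
      (by rw [hθsum (m + 1) (by omega) hmM, hθsum m (by omega) hmM.le])
    have hcoef : ∑ i ∈ range m, ((γ (m + 1) i - k * Λ * θ (m + 1) i)
          - (γ m i - k * Λ * θ m i)) * ‖U m - U i‖ ^ 2
        = ∑ i ∈ range m, (∑ j ∈ Icc (m + 1) M, γt j i * γt j m / St j j) * ‖U m - U i‖ ^ 2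
          - ∑ i ∈ range m, γt m i * ‖U m - U i‖ ^ 2 := by
      rw [← sum_sub_distrib]
      refine sum_congr rfl fun i hi => ?_
      rw [sub_eq_sum_sub_of_rec (fun m i => γ m i - k * Λ * θ m i) γt St M hSt hrec (by omega)
        hmM (mem_range.mp hi) (hSmm (m + 1) (by omega) hmM).ne', sub_mul]
    have hdisp := sum_dispersion_succ_div (Icc (m + 1) M) γt (fun j => St j j) U m
    have hsplit : ∑ j ∈ Icc m M, dispersion (γt j) U m / St j j
        = dispersion (γt m) U m / St m m + ∑ j ∈ Icc (m + 1) M, dispersion (γt j) U m / St j j := by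
      rw [← insert_Icc_add_one_left_eq_Icc hmM.le, sum_insert (by simp)]
    have hmin' := hmin (m + 1) (by omega) hmM (U m)
    have hv := mul_le_mul_of_nonneg_left (hvar m (by omega) hmM.le)
      (by positivity : 0 ≤ (2 * k)⁻¹)
    rw [hcoef] at hstep
    rw [hdisp] at ih
    rw [hsplit]
    linarith
  · have hlast := add_le_stageFunc (E₁ := E₁) (U := U) (γ := γ) hk₀ hquad M
      (fun i hi => hθnonneg M i (by omega) le_rfl hi) (hθsum M (by omega) le_rfl) (U M)
    have hγt : ∀ i ∈ range M, γ M i - k * Λ * θ M i = γt M i := fun i hi => by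
      rw [hrec M i (by omega) le_rfl (mem_range.mp hi), Icc_eq_empty (by omega), sum_empty,
        sub_zero]
    rw [sum_congr rfl fun i hi => by rw [hγt i hi]] at hlast
    rw [Icc_self, sum_singleton]
    have hv := mul_le_mul_of_nonneg_left (hvar M (by omega) le_rfl)
      (by positivity : 0 ≤ (2 * k)⁻¹)
    linarith

theorem stmt_13_general {H : Type*} [NormedAddCommGroup H] [InnerProductSpace ℝ H]
    (E₁ E₂ : H → ℝ) (g : H → H)
    (k Λ : ℝ) (hk : 0 < k)
    (hquad : ∀ u p : H, E₂ u ≤ E₂ p + (inner ℝ (g p) (u - p) : ℝ) + Λ / 2 * ‖u - p‖ ^ 2)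
    (M : ℕ) (hM : 1 ≤ M) (θ γ γt St : ℕ → ℕ → ℝ)
    (hSt : ∀ j m : ℕ, St j m = ∑ i ∈ Finset.range m, γt j i)
    (hrec : ∀ m i : ℕ, 1 ≤ m → m ≤ M → i < m →
      γt m i = γ m i - k * Λ * θ m i - ∑ j ∈ Finset.Icc (m + 1) M, γt j i * (St j m / St j j))
    (hSmm : ∀ m : ℕ, 1 ≤ m → m ≤ M → 0 < St m m)
    (hθnonneg : ∀ m i : ℕ, 1 ≤ m → m ≤ M → i < m → 0 ≤ θ m i)
    (hθmono : ∀ m i : ℕ, 2 ≤ m → m ≤ M → i < m - 1 → θ m i ≤ θ (m - 1) i)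
    (hθsum : ∀ m : ℕ, 1 ≤ m → m ≤ M → ∑ i ∈ Finset.range m, θ m i = 1)
    (U : ℕ → H)
    (hmin : ∀ m : ℕ, 1 ≤ m → m ≤ M →
      ∀ u : H, stageFunc E₁ E₂ g k θ γ m U (U m) ≤ stageFunc E₁ E₂ g k θ γ m U u) :
    E₁ (U M) + E₂ (U M) ≤ E₁ (U 0) + E₂ (U 0) := by
  have hfirst := energy_le_stageFunc_sub_dispersion hk hquad hSt hrec hSmm hθnonneg hθmono hθsum
    hmin le_rfl hM
  simp only [dispersion_one, zero_div, sum_const_zero, mul_zero, sub_zero] at hfirst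
  have hθ₁ : θ 1 0 = 1 := by simpa using hθsum 1 le_rfl hM
  have hstart : stageFunc E₁ E₂ g k θ γ 1 U (U 0) = E₁ (U 0) + E₂ (U 0) := by
    simp [stageFunc, hθ₁]
  linarith [hmin 1 le_rfl hM (U 0)]

/-- Theorem 2.1 of the paper: energy stability of the multistage ARK IMEX
scheme (2.1): if each stage `U m` (for `1 ≤ m ≤ M`) is a global minimizer of its stage
functional, then `E(U M) ≤ E(U 0)` where `E = E₁ + E₂`. -/
theorem stmt_13 {H : Type*} [NormedAddCommGroup H] [InnerProductSpace ℝ H] [CompleteSpace H]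
    (E₁ E₂ : H → ℝ) (g : H → H) (hgrad : ∀ x, HasGradientAt E₂ (g x) x)
    (k Λ : ℝ) (hk : 0 < k) (hΛ : 0 ≤ Λ)
    (hquad : ∀ u p : H, E₂ u ≤ E₂ p + (inner ℝ (g p) (u - p) : ℝ) + Λ / 2 * ‖u - p‖ ^ 2)
    (M : ℕ) (hM : 1 ≤ M) (θ γ γt St : ℕ → ℕ → ℝ)
    (hSt : ∀ j m : ℕ, St j m = ∑ i ∈ Finset.range m, γt j i)
    (hrec : ∀ m i : ℕ, 1 ≤ m → m ≤ M → i < m →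
      γt m i = γ m i - k * Λ * θ m i - ∑ j ∈ Finset.Icc (m + 1) M, γt j i * (St j m / St j j))
    (hSmm : ∀ m : ℕ, 1 ≤ m → m ≤ M → 0 < St m m)
    (hSjm : ∀ m j : ℕ, 1 ≤ m → m ≤ j → j ≤ M → St j m ≠ 0)
    (hθnonneg : ∀ m i : ℕ, 1 ≤ m → m ≤ M → i < m → 0 ≤ θ m i)
    (hθmono : ∀ m i : ℕ, 2 ≤ m → m ≤ M → i < m - 1 → θ m i ≤ θ (m - 1) i)
    (hθsum : ∀ m : ℕ, 1 ≤ m → m ≤ M → ∑ i ∈ Finset.range m, θ m i = 1)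
    (U : ℕ → H)
    (hmin : ∀ m : ℕ, 1 ≤ m → m ≤ M →
      ∀ u : H, stageFunc E₁ E₂ g k θ γ m U (U m) ≤ stageFunc E₁ E₂ g k θ γ m U u) :
    E₁ (U M) + E₂ (U M) ≤ E₁ (U 0) + E₂ (U 0) :=
  stmt_13_general E₁ E₂ g k Λ hk hquad M hM θ γ γt St hSt hrec hSmm hθnonneg hθmono hθsum U hmin
end
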